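/- arXiv:2602.07551 — 5 statements merged into one kernel-verified Lean document; each statement's English description precedes it below -/
import Mathlib

section
/- Let g : Σ̄ → ℂ∪{∞} be a degree-d (d ≥ 2) holomorphic map from a compact Riemann surface of Euler characteristic χ. Let b₁,…,b_R be totally ramified values of g that are not omitted, with orders ν(b₁),…,ν(b_R). Then 2R ≤ ∑_{j=1}^R ν(b_j) ≤ ⌊(d/(d−1))·B⌋, where B = −χ + 2d is the total branching order of g. -/
/-- Proposition 3.1: let `g` be a degree-`d` (`d ≥ 2`) holomorphic map from a
compact Riemann surface of Euler characteristic `χ` to the sphere, modelled by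
the disjoint fibers `F j` over the non-omitted totally ramified values
`b₁, …, b_R`, with local multiplicities `e` and orders `ν j = min over F j of e`.
With total branching order `B = -χ + 2d`, one has
`2R ≤ ∑ ν j ≤ ⌊(d/(d-1)) * B⌋`. -/
theorem sum_of_orders_estimate {α : Type*} [DecidableEq α]
    (d R B : ℕ) (χ : ℤ) (hd : 2 ≤ d) (hB : (B : ℤ) = -χ + 2 * d)
    (F : Fin R → Finset α) (e : α → ℕ) (ν : Fin R → ℕ)
    (hdisj : ∀ i j, i ≠ j → Disjoint (F i) (F j))
    (hne : ∀ j, (F j).Nonempty)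
    (hsum : ∀ j, ∑ p ∈ F j, e p = d)
    (hν : ∀ j, 2 ≤ ν j)
    (hmin : ∀ j, ∀ p ∈ F j, ν j ≤ e p)
    (hattained : ∀ j, ∃ p ∈ F j, e p = ν j)
    (hbranch : ∑ j, ∑ p ∈ F j, (e p - 1) ≤ B) :
    2 * R ≤ ∑ j, ν j ∧
      ((∑ j, ν j : ℕ) : ℤ) ≤ ⌊(d : ℚ) / ((d : ℚ) - 1) * (B : ℚ)⌋ := by
  have h1e : ∀ j, ∀ p ∈ F j, 1 ≤ e p := fun j p hp =>
    le_trans (le_trans one_le_two (hν j)) (hmin j p hp)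
  -- per-fiber key inequality over ℤ
  have key : ∀ j, ((d : ℤ) - 1) * ν j ≤ d * (∑ p ∈ F j, (e p - 1) : ℕ) := by
    intro j
    set c : ℕ := (F j).card with hc
    have hBj : ((∑ p ∈ F j, (e p - 1) : ℕ) : ℤ) = (d : ℤ) - c := by
      rw [Nat.cast_sum]
      have : ∑ p ∈ F j, ((e p - 1 : ℕ) : ℤ) = ∑ p ∈ F j, ((e p : ℤ) - 1) :=
        Finset.sum_congr rfl fun p hp => by
          rw [Nat.cast_sub (h1e j p hp)]; simp
      rw [this, Finset.sum_sub_distrib, Finset.sum_const, ← hsum j]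
      push_cast [hc]
      ring
    have hcν : (c : ℤ) * ν j ≤ d := by
      have : ∑ p ∈ F j, ν j ≤ ∑ p ∈ F j, e p :=
        Finset.sum_le_sum (hmin j)
      rw [Finset.sum_const, hsum j, smul_eq_mul] at this
      exact_mod_cast this
    have hνd : (ν j : ℤ) ≤ d := by
      obtain ⟨p, hp, hep⟩ := hattained j
      have : e p ≤ d := hsum j ▸ Finset.single_le_sum (fun q _ => Nat.zero_le _) hp
      exact_mod_cast hep ▸ this
    have hν2 : (2 : ℤ) ≤ ν j := by exact_mod_cast hν j
    have hd2 : (2 : ℤ) ≤ d := by exact_mod_cast hd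
    have hc1 : (1 : ℤ) ≤ c := by
      have := Finset.card_pos.mpr (hne j); exact_mod_cast this
    rw [hBj]
    have h2 : (0 : ℤ) ≤ ((d : ℤ) - ν j) * ((d : ℤ) * ν j - d - ν j) := by
      apply mul_nonneg (by linarith)
      nlinarith
    nlinarith [mul_le_mul_of_nonneg_left hcν (by linarith : (0:ℤ) ≤ (d:ℤ))]
  -- summed inequality
  have hsummed : ((d : ℤ) - 1) * (∑ j, ν j : ℕ) ≤ (d : ℤ) * B := by
    calc ((d : ℤ) - 1) * (∑ j, ν j : ℕ)
        = ∑ j, ((d : ℤ) - 1) * ν j := by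
          rw [Nat.cast_sum, Finset.mul_sum]
      _ ≤ ∑ j, (d : ℤ) * (∑ p ∈ F j, (e p - 1) : ℕ) :=
          Finset.sum_le_sum fun j _ => key j
      _ = (d : ℤ) * ((∑ j, ∑ p ∈ F j, (e p - 1) : ℕ) : ℤ) := by
          rw [← Finset.mul_sum, Nat.cast_sum]
      _ ≤ (d : ℤ) * B := by
          have : ((∑ j, ∑ p ∈ F j, (e p - 1) : ℕ) : ℤ) ≤ B := by exact_mod_cast hbranch
          exact mul_le_mul_of_nonneg_left this (by positivity)
  constructor
  · calc 2 * R = ∑ _j : Fin R, 2 := by simp [Finset.sum_const, mul_comm]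
      _ ≤ ∑ j, ν j := Finset.sum_le_sum fun j _ => hν j
  · rw [Int.le_floor]
    have hd1 : (0 : ℚ) < (d : ℚ) - 1 := by
      have : (2 : ℚ) ≤ d := by exact_mod_cast hd
      linarith
    rw [div_mul_eq_mul_div, le_div_iff₀ hd1]
    have : ((∑ j, ν j : ℕ) : ℚ) * ((d : ℚ) - 1) ≤ (d : ℚ) * B := by
      exact_mod_cast (by linarith [hsummed] : ((∑ j, ν j : ℕ) : ℤ) * ((d : ℤ) - 1) ≤ (d : ℤ) * B)
    exact_mod_cast this
end

section
/- Under the hypotheses of the order-sum estimate (compact Riemann surface, degree d ≥ 2, total branching order B = −χ + 2d), the total weight of totally ramified values satisfies ν_g ≤ D_g + (1/4)·⌊(d/(d−1))·B⌋, where D_g is the number of omitted values and ν_g = D_g + ∑_{j=1}^{R}(1 − 1/ν(b_j)). -/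
/-- Corollary 3.5: under the hypotheses of the order-sum estimate, the total
weight of totally ramified values `ν_g = D + ∑ (1 - 1/ν(b_j))` satisfies
`ν_g ≤ D + (1/4)·⌊(d/(d-1))·B⌋`, where `D` is the number of omitted values and
`B = -χ + 2d` the total branching order. -/
theorem total_weight_estimate {α : Type*} [DecidableEq α]
    (d R B D : ℕ) (χ : ℤ) (hd : 2 ≤ d) (hB : (B : ℤ) = -χ + 2 * d)
    (F : Fin R → Finset α) (e : α → ℕ) (ν : Fin R → ℕ)
    (hdisj : ∀ i j, i ≠ j → Disjoint (F i) (F j))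
    (hne : ∀ j, (F j).Nonempty)
    (hsum : ∀ j, ∑ p ∈ F j, e p = d)
    (hν : ∀ j, 2 ≤ ν j)
    (hmin : ∀ j, ∀ p ∈ F j, ν j ≤ e p)
    (hattained : ∀ j, ∃ p ∈ F j, e p = ν j)
    (hbranch : ∑ j, ∑ p ∈ F j, (e p - 1) ≤ B) :
    (D : ℚ) + ∑ j, (1 - 1 / (ν j : ℚ)) ≤
      (D : ℚ) + (1 / 4) * (⌊(d : ℚ) / ((d : ℚ) - 1) * (B : ℚ)⌋ : ℚ) := by
  have hD2 : (2:ℚ) ≤ (d:ℚ) := by exact_mod_cast hd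
  -- fiber cardinality bound: ν j * card ≤ d
  have hK : ∀ j, ν j * (F j).card ≤ d := by
    intro j
    calc ν j * (F j).card = ∑ _p ∈ F j, ν j := by
          rw [Finset.sum_const, smul_eq_mul, mul_comm]
      _ ≤ ∑ p ∈ F j, e p := Finset.sum_le_sum (hmin j)
      _ = d := hsum j
  have hνd : ∀ j, ν j ≤ d := by
    intro j
    obtain ⟨p, hp, hpe⟩ := hattained j
    calc ν j = e p := hpe.symm
      _ ≤ ∑ q ∈ F j, e q := Finset.single_le_sum (fun _ _ => Nat.zero_le _) hp
      _ = d := hsum j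
  -- the branching contribution of fiber j equals d - card in ℚ
  have hcast : ∀ j, (d:ℚ) - (F j).card = ∑ p ∈ F j, ((e p - 1 : ℕ) : ℚ) := by
    intro j
    have h1 : ∀ p ∈ F j, ((e p - 1 : ℕ) : ℚ) = (e p : ℚ) - 1 := by
      intro p hp
      have : 1 ≤ e p := le_trans (le_trans one_le_two (hν j)) (hmin j p hp)
      push_cast [this]
      ring
    rw [Finset.sum_congr rfl h1, Finset.sum_sub_distrib, Finset.sum_const,
      nsmul_eq_mul, mul_one]
    have : ((∑ p ∈ F j, e p : ℕ) : ℚ) = (d : ℚ) := by exact_mod_cast hsum j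
    push_cast at this ⊢
    rw [this]
  -- key per-fiber inequality: (d-1) ν j ≤ d (d - card)
  have hkey : ∀ j, ((d:ℚ) - 1) * (ν j : ℚ) ≤ (d:ℚ) * ((d:ℚ) - (F j).card) := by
    intro j
    have h2 : (2:ℚ) ≤ (ν j : ℚ) := by exact_mod_cast hν j
    have ha : (0:ℚ) < (ν j : ℚ) := by linarith
    have had : (ν j : ℚ) ≤ (d:ℚ) := by exact_mod_cast hνd j
    have hak : (ν j : ℚ) * ((F j).card : ℚ) ≤ (d:ℚ) := by exact_mod_cast hK j
    nlinarith [mul_nonneg (sub_nonneg.2 had) (by nlinarith : (0:ℚ) ≤ ((d:ℚ)-1) * (ν j : ℚ) - d),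
      mul_le_mul_of_nonneg_left hak (by linarith : (0:ℚ) ≤ (d:ℚ))]
  -- total: (d-1) * S ≤ d * B
  have hSB : ((d:ℚ) - 1) * ∑ j, (ν j : ℚ) ≤ (d:ℚ) * (B:ℚ) := by
    have hb : ∑ j, ∑ p ∈ F j, ((e p - 1 : ℕ) : ℚ) ≤ (B:ℚ) := by
      exact_mod_cast Nat.cast_le.2 hbranch
    calc ((d:ℚ) - 1) * ∑ j, (ν j : ℚ) = ∑ j, ((d:ℚ) - 1) * (ν j : ℚ) := by
          rw [Finset.mul_sum]
      _ ≤ ∑ j, (d:ℚ) * ((d:ℚ) - (F j).card) := Finset.sum_le_sum fun j _ => hkey j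
      _ = (d:ℚ) * ∑ j, ∑ p ∈ F j, ((e p - 1 : ℕ) : ℚ) := by
          rw [Finset.mul_sum]; exact Finset.sum_congr rfl fun j _ => by rw [hcast j]
      _ ≤ (d:ℚ) * (B:ℚ) := by
          apply mul_le_mul_of_nonneg_left hb (by linarith)
  -- S ≤ floor
  have hSfloor : (∑ j, (ν j : ℚ)) ≤ (⌊(d : ℚ) / ((d : ℚ) - 1) * (B : ℚ)⌋ : ℚ) := by
    have hd1 : (0:ℚ) < (d:ℚ) - 1 := by linarith
    have hS : (∑ j, (ν j : ℚ)) ≤ (d : ℚ) / ((d : ℚ) - 1) * (B : ℚ) := by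
      rw [div_mul_eq_mul_div, le_div_iff₀ hd1]
      linarith [hSB]
    have hSnat : (∑ j, (ν j : ℚ)) = ((∑ j, ν j : ℕ) : ℚ) := by push_cast; ring
    rw [hSnat] at hS ⊢
    have : ((∑ j, ν j : ℕ) : ℤ) ≤ ⌊(d : ℚ) / ((d : ℚ) - 1) * (B : ℚ)⌋ := by
      rw [Int.le_floor]; exact_mod_cast hS
    exact_mod_cast this
  -- pointwise: 1 - 1/ν ≤ ν/4
  have hpt : ∀ j, (1:ℚ) - 1 / (ν j : ℚ) ≤ (ν j : ℚ) / 4 := by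
    intro j
    have h2 : (2:ℚ) ≤ (ν j : ℚ) := by exact_mod_cast hν j
    have ha : (0:ℚ) < (ν j : ℚ) := by linarith
    rw [one_div, sub_le_iff_le_add]
    have h := mul_inv_cancel₀ ha.ne'
    nlinarith [sq_nonneg ((ν j : ℚ) - 2)]
  have : ∑ j, ((1:ℚ) - 1 / (ν j : ℚ)) ≤ (∑ j, (ν j : ℚ)) / 4 := by
    rw [Finset.sum_div]
    exact Finset.sum_le_sum fun j _ => hpt j
  linarith
end

section
/- Let G be a rational map of the sphere of degree 4 with distinct points p₀, p₁, s₁, s₂ such that G⁻¹(0) = {p₀} with multiplicity 4, G⁻¹(1) = {p₁, s₁, s₂} with multiplicities 2, 1, 1 respectively, and G⁻¹(∞) = {q₁, q₂} with each pole of order 2. Then the cross ratio [p₀, p₁; s₁, s₂] = ((p₀−s₁)/(p₀−s₂))·((p₁−s₂)/(p₁−s₁)) equals −1. -/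
private lemma aux_case1 (D p t u : ℂ) (hD : D ≠ 0) (hD1 : D + 1 ≠ 0)
    (hp : p ≠ 0) (hu : u ≠ 0)
    (h3 : D * (2*p+t) * (4*(p^2+2*p*t+u) + D*(2*p+t)^2) + 8*p*(p*t+2*u) = 0)
    (h4 : D * (4*(p^2+2*p*t+u) + D*(2*p+t)^2)^2 + 64*p^2*u = 0) :
    p*t - 2*u = 0 := by
  have hp2 : (64:ℂ) * p^2 ≠ 0 := by
    apply mul_ne_zero (by norm_num) (pow_ne_zero _ hp)
  -- s1 : D A² u + w² = 0
  have s1 : D * (2*p+t)^2 * u + (p*t+2*u)^2 = 0 := by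
    have h : (64*p^2) * (D * (2*p+t)^2 * u + (p*t+2*u)^2) = 0 := by
      linear_combination D*(2*p+t)^2 * h4 -
        (D*(2*p+t)*(4*(p^2+2*p*t+u) + D*(2*p+t)^2) - 8*p*(p*t+2*u)) * h3
    exact (mul_eq_zero.mp h).resolve_left hp2
  -- s2 : w (8 p u A - w X) = 0
  have s2 : (p*t+2*u) * (8*p*u*(2*p+t) - (p*t+2*u)*(4*(p^2+2*p*t+u) + D*(2*p+t)^2)) = 0 := by
    linear_combination u*(2*p+t) * h3 - (4*(p^2+2*p*t+u) + D*(2*p+t)^2) * s1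
  rcases eq_or_ne (p*t+2*u) 0 with hw | hw
  · -- degenerate case: leads to D = -1, contradiction
    exfalso
    have h5 : D * ((2*p+t)^2 * u) = 0 := by
      linear_combination s1 - (p*t+2*u) * hw
    have h6 : (2*p+t)^2 * u = 0 := (mul_eq_zero.mp h5).resolve_left hD
    have h7 : (2*p+t)^2 = 0 := (mul_eq_zero.mp h6).resolve_right hu
    have hA : 2*p+t = 0 := (pow_eq_zero_iff two_ne_zero).mp h7
    have hu2 : u = p^2 := by linear_combination (1/2) * hw - (p/2) * hA
    have h8 : (64*p^4) * (D+1) = 0 := by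
      linear_combination h4 -
        (64*D*p*u + 64*D*p^2*t - 64*D*p^3 + 8*D^2*t*u + 16*D^2*p*u + 16*D^2*p*t^2
          + 40*D^2*p^2*t + 16*D^2*p^3 + D^3*t^3 + 6*D^3*p*t^2 + 12*D^3*p^2*t
          + 8*D^3*p^3) * hA -
        (64*p^2 + 16*D*u - 80*D*p^2) * hu2
    have h9 : D + 1 = 0 := by
      refine (mul_eq_zero.mp h8).resolve_left ?_
      exact mul_ne_zero (by norm_num) (pow_ne_zero _ hp)
    exact hD1 h9
  · have hwX : 8*p*u*(2*p+t) - (p*t+2*u)*(4*(p^2+2*p*t+u) + D*(2*p+t)^2) = 0 :=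
      (mul_eq_zero.mp s2).resolve_left hw
    have s3 : (2*u - p*t) * (4*u*p^2 - (p*t)^2) = 0 := by
      linear_combination u * hwX + (p*t+2*u) * s1
    rcases mul_eq_zero.mp s3 with hgood | hr
    · linear_combination -hgood
    · exfalso
      have h10 : p^2 * (4*u*(p^2+p*t+u)*(D+1)) = 0 := by
        linear_combination p^2 * s1 + (u*(D+1) + p^2 - u) * hr
      have h11 : 4*u*(p^2+p*t+u)*(D+1) = 0 :=
        (mul_eq_zero.mp h10).resolve_left (pow_ne_zero _ hp)
      have h12 : p^2+p*t+u = 0 := by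
        rcases mul_eq_zero.mp h11 with h | h
        · rcases mul_eq_zero.mp h with h' | h'
          · exfalso
            rcases mul_eq_zero.mp h' with h'' | h''
            · norm_num at h''
            · exact hu h''
          · exact h'
        · exact absurd h hD1
      have h13 : (p*(2*p+t))^2 = 0 := by
        linear_combination 4*p^2 * h12 - hr
      have h14 : p*(2*p+t) = 0 := (pow_eq_zero_iff two_ne_zero).mp h13
      have hA2 : 2*p+t = 0 := (mul_eq_zero.mp h14).resolve_left hp
      have h15 : (p*t+2*u)^2 = 0 := by
        linear_combination s1 - D*u*(2*p+t) * hA2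
      exact hw ((pow_eq_zero_iff two_ne_zero).mp h15)

/-- Lemma 4.2: let `G` be a degree-4 rational map with `G⁻¹(0) = {p₀}` of
multiplicity 4, `G⁻¹(1) = {p₁, s₁, s₂}` with multiplicities 2, 1, 1, and
`G⁻¹(∞) = {q₁, q₂}`, each pole of order 2. Writing
`G(z) = C (z - p₀)⁴ / ((z - q₁)² (z - q₂)²)`, the zero structure of `G - 1`
is encoded by the polynomial identity below. Then the cross ratio
`[p₀, p₁; s₁, s₂] = -1`. -/
theorem cross_ratio_case1 (p₀ p₁ s₁ s₂ q₁ q₂ : ℂ)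
    (h01 : p₀ ≠ p₁) (h0s1 : p₀ ≠ s₁) (h0s2 : p₀ ≠ s₂)
    (h1s1 : p₁ ≠ s₁) (h1s2 : p₁ ≠ s₂) (hs12 : s₁ ≠ s₂)
    (hq : q₁ ≠ q₂)
    (hq1 : q₁ ∉ ({p₀, p₁, s₁, s₂} : Set ℂ)) (hq2 : q₂ ∉ ({p₀, p₁, s₁, s₂} : Set ℂ))
    (C D : ℂ) (hC : C ≠ 0) (hD : D ≠ 0)
    (heq : ∀ z : ℂ, C * (z - p₀) ^ 4 - (z - q₁) ^ 2 * (z - q₂) ^ 2 =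
      D * (z - p₁) ^ 2 * (z - s₁) * (z - s₂)) :
    (p₀ - s₁) / (p₀ - s₂) * ((p₁ - s₂) / (p₁ - s₁)) = -1 := by
  -- coefficient equations, extracted by evaluating at p₀, p₀±1, p₀±2
  have c4 : C = 1 + D := by
    linear_combination (1/24) * heq (p₀+2) - (1/6) * heq (p₀+1) + (1/4) * heq p₀
      - (1/6) * heq (p₀-1) + (1/24) * heq (p₀-2)
  have c3 : 2*(q₁+q₂-2*p₀) + D*(2*(p₁-p₀) + (s₁+s₂-2*p₀)) = 0 := by
    linear_combination (1/12) * heq (p₀+2) - (1/6) * heq (p₀+1)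
      + (1/6) * heq (p₀-1) - (1/12) * heq (p₀-2)
  have c2 : (q₁+q₂-2*p₀)^2 + 2*((q₁-p₀)*(q₂-p₀))
      + D*((p₁-p₀)^2 + 2*(p₁-p₀)*(s₁+s₂-2*p₀) + (s₁-p₀)*(s₂-p₀)) = 0 := by
    linear_combination (1/24) * heq (p₀+2) - (2/3) * heq (p₀+1) + (5/4) * heq p₀
      - (2/3) * heq (p₀-1) + (1/24) * heq (p₀-2)
  have c1 : 2*(q₁+q₂-2*p₀)*((q₁-p₀)*(q₂-p₀))
      + D*(p₁-p₀)*((p₁-p₀)*(s₁+s₂-2*p₀) + 2*((s₁-p₀)*(s₂-p₀))) = 0 := by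
    linear_combination (-1/12) * heq (p₀+2) + (2/3) * heq (p₀+1)
      - (2/3) * heq (p₀-1) + (1/12) * heq (p₀-2)
  have c0 : ((q₁-p₀)*(q₂-p₀))^2 + D*(p₁-p₀)^2*((s₁-p₀)*(s₂-p₀)) = 0 := by
    linear_combination -heq p₀
  -- abbreviations (as plain complex numbers)
  set σ : ℂ := q₁+q₂-2*p₀ with hσdef
  set Pq : ℂ := (q₁-p₀)*(q₂-p₀) with hπdef
  have hp : p₁ - p₀ ≠ 0 := sub_ne_zero.mpr (Ne.symm h01)
  have hu : (s₁-p₀)*(s₂-p₀) ≠ 0 :=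
    mul_ne_zero (sub_ne_zero.mpr (Ne.symm h0s1)) (sub_ne_zero.mpr (Ne.symm h0s2))
  have hD1 : D + 1 ≠ 0 := by
    intro h
    apply hC
    rw [c4]; linear_combination h
  -- the two key polynomial relations (F3 and F4)
  have h3 : D * (2*(p₁-p₀)+(s₁+s₂-2*p₀)) *
      (4*((p₁-p₀)^2+2*(p₁-p₀)*(s₁+s₂-2*p₀)+(s₁-p₀)*(s₂-p₀))
        + D*(2*(p₁-p₀)+(s₁+s₂-2*p₀))^2)
      + 8*(p₁-p₀)*((p₁-p₀)*(s₁+s₂-2*p₀)+2*((s₁-p₀)*(s₂-p₀))) = 0 := by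
    have h : D * (D * (2*(p₁-p₀)+(s₁+s₂-2*p₀)) *
        (4*((p₁-p₀)^2+2*(p₁-p₀)*(s₁+s₂-2*p₀)+(s₁-p₀)*(s₂-p₀))
          + D*(2*(p₁-p₀)+(s₁+s₂-2*p₀))^2)
        + 8*(p₁-p₀)*((p₁-p₀)*(s₁+s₂-2*p₀)+2*((s₁-p₀)*(s₂-p₀)))) = 0 := by
      linear_combination 8 * c1 + (-8*σ) * c2 +
        (4*D*((s₁-p₀)*(s₂-p₀)) + 8*D*(p₁-p₀)*(s₁+s₂-2*p₀) + 4*D*(p₁-p₀)^2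
          + D^2*(s₁+s₂-2*p₀)^2 + 4*D^2*(p₁-p₀)*(s₁+s₂-2*p₀) + 4*D^2*(p₁-p₀)^2
          - 2*σ*D*(s₁+s₂-2*p₀) - 4*σ*D*(p₁-p₀) + 4*σ^2) * c3
    exact (mul_eq_zero.mp h).resolve_left hD
  have h4 : D * (4*((p₁-p₀)^2+2*(p₁-p₀)*(s₁+s₂-2*p₀)+(s₁-p₀)*(s₂-p₀))
        + D*(2*(p₁-p₀)+(s₁+s₂-2*p₀))^2)^2
      + 64*(p₁-p₀)^2*((s₁-p₀)*(s₂-p₀)) = 0 := by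
    have h : D * (D * (4*((p₁-p₀)^2+2*(p₁-p₀)*(s₁+s₂-2*p₀)+(s₁-p₀)*(s₂-p₀))
          + D*(2*(p₁-p₀)+(s₁+s₂-2*p₀))^2)^2
        + 64*(p₁-p₀)^2*((s₁-p₀)*(s₂-p₀))) = 0 := by
      linear_combination 64 * c0 +
        (16*D*((s₁-p₀)*(s₂-p₀)) + 32*D*(p₁-p₀)*(s₁+s₂-2*p₀) + 16*D*(p₁-p₀)^2
          + 16*σ^2 - 32*Pq) * c2 +
        (8*D^2*(s₁+s₂-2*p₀)*((s₁-p₀)*(s₂-p₀)) + 16*D^2*(p₁-p₀)*((s₁-p₀)*(s₂-p₀))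
          + 16*D^2*(p₁-p₀)*(s₁+s₂-2*p₀)^2 + 40*D^2*(p₁-p₀)^2*(s₁+s₂-2*p₀)
          + 16*D^2*(p₁-p₀)^3 + D^3*(s₁+s₂-2*p₀)^3 + 6*D^3*(p₁-p₀)*(s₁+s₂-2*p₀)^2
          + 12*D^3*(p₁-p₀)^2*(s₁+s₂-2*p₀) + 8*D^3*(p₁-p₀)^3
          - 16*σ*D*((s₁-p₀)*(s₂-p₀)) - 32*σ*D*(p₁-p₀)*(s₁+s₂-2*p₀)
          - 16*σ*D*(p₁-p₀)^2 - 2*σ*D^2*(s₁+s₂-2*p₀)^2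
          - 8*σ*D^2*(p₁-p₀)*(s₁+s₂-2*p₀) - 8*σ*D^2*(p₁-p₀)^2
          + 4*σ^2*D*(s₁+s₂-2*p₀) + 8*σ^2*D*(p₁-p₀) - 8*σ^3) * c3
    exact (mul_eq_zero.mp h).resolve_left hD
  have key : (p₁-p₀)*(s₁+s₂-2*p₀) - 2*((s₁-p₀)*(s₂-p₀)) = 0 :=
    aux_case1 D (p₁-p₀) (s₁+s₂-2*p₀) ((s₁-p₀)*(s₂-p₀)) hD hD1 hp hu h3 h4
  have hne1 : p₀ - s₂ ≠ 0 := sub_ne_zero.mpr h0s2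
  have hne2 : p₁ - s₁ ≠ 0 := sub_ne_zero.mpr h1s1
  field_simp
  linear_combination -key
end

section
/- Let G be a rational map of the sphere of degree 4 with distinct points p₃, p₁, s₃, s₁ such that G has a zero of order 3 at p₃ and a simple zero at p₁ (and no other zeros), G − 1 has a zero of order 3 at s₃ and a simple zero at s₁ (and no other zeros), and G has exactly two poles, each of order 2. Then the cross ratio [p₃, p₁; s₃, s₁] equals 9. -/
private lemma deriv_fun_zero {f f' : ℂ → ℂ}
    (hd : ∀ z, HasDerivAt f (f' z) z) (h0 : ∀ z, f z = 0) : ∀ z, f' z = 0 := by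
  intro z
  have hfz : f = fun _ => (0 : ℂ) := funext h0
  have h1 : HasDerivAt f 0 z := by rw [hfz]; exact hasDerivAt_const z 0
  exact (hd z).unique h1

/-- Lemma 4.3: let `G` be a degree-4 rational map with a zero of order 3 at
`p₃` and a simple zero at `p₁` (no other zeros), `G - 1` having a zero of
order 3 at `s₃` and a simple zero at `s₁` (no other zeros), and exactly two
poles `q₁, q₂`, each of order 2. Writing
`G(z) = C (z - p₃)³ (z - p₁) / ((z - q₁)² (z - q₂)²)`, the zero structure of
`G - 1` is encoded by the polynomial identity below. Then the cross ratio
`[p₃, p₁; s₃, s₁] = 9`. -/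
theorem cross_ratio_case2 (p₃ p₁ s₃ s₁ q₁ q₂ : ℂ)
    (h31 : p₃ ≠ p₁) (h3s3 : p₃ ≠ s₃) (h3s1 : p₃ ≠ s₁)
    (h1s3 : p₁ ≠ s₃) (h1s1 : p₁ ≠ s₁) (hs31 : s₃ ≠ s₁)
    (hq : q₁ ≠ q₂)
    (hq1 : q₁ ∉ ({p₃, p₁, s₃, s₁} : Set ℂ)) (hq2 : q₂ ∉ ({p₃, p₁, s₃, s₁} : Set ℂ))
    (C D : ℂ) (hC : C ≠ 0) (hD : D ≠ 0)
    (heq : ∀ z : ℂ, C * (z - p₃) ^ 3 * (z - p₁) - (z - q₁) ^ 2 * (z - q₂) ^ 2 =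
      D * (z - s₃) ^ 3 * (z - s₁)) :
    (p₃ - s₃) / (p₃ - s₁) * ((p₁ - s₁) / (p₁ - s₃)) = 9 := by
  -- the identity as "= 0"
  have hf0 : ∀ z : ℂ, C * (z - p₃) ^ 3 * (z - p₁) - (z - q₁) ^ 2 * (z - q₂) ^ 2
      - D * (z - s₃) ^ 3 * (z - s₁) = 0 := by
    intro z; linear_combination heq z
  -- first derivative identity
  have hd1 : ∀ z : ℂ, HasDerivAt
      (fun z => C * (z - p₃) ^ 3 * (z - p₁) - (z - q₁) ^ 2 * (z - q₂) ^ 2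
        - D * (z - s₃) ^ 3 * (z - s₁))
      (C * (3 * (z - p₃) ^ 2 * (z - p₁) + (z - p₃) ^ 3)
        - (2 * (z - q₁) * (z - q₂) ^ 2 + (z - q₁) ^ 2 * (2 * (z - q₂)))
        - D * (3 * (z - s₃) ^ 2 * (z - s₁) + (z - s₃) ^ 3)) z := by
    intro z
    have h1 : HasDerivAt (fun z : ℂ => z - p₃) 1 z := (hasDerivAt_id z).sub_const p₃
    have h2 : HasDerivAt (fun z : ℂ => z - p₁) 1 z := (hasDerivAt_id z).sub_const p₁
    have h3 : HasDerivAt (fun z : ℂ => z - q₁) 1 z := (hasDerivAt_id z).sub_const q₁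
    have h4 : HasDerivAt (fun z : ℂ => z - q₂) 1 z := (hasDerivAt_id z).sub_const q₂
    have h5 : HasDerivAt (fun z : ℂ => z - s₃) 1 z := (hasDerivAt_id z).sub_const s₃
    have h6 : HasDerivAt (fun z : ℂ => z - s₁) 1 z := (hasDerivAt_id z).sub_const s₁
    have H := ((((h1.pow 3).const_mul C).mul h2).sub ((h3.pow 2).mul (h4.pow 2))).sub
      (((h5.pow 3).const_mul D).mul h6)
    refine H.congr_deriv ?_
    simp only [Pi.pow_apply]; push_cast; ring
  have hg0 : ∀ z : ℂ, C * (3 * (z - p₃) ^ 2 * (z - p₁) + (z - p₃) ^ 3)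
      - (2 * (z - q₁) * (z - q₂) ^ 2 + (z - q₁) ^ 2 * (2 * (z - q₂)))
      - D * (3 * (z - s₃) ^ 2 * (z - s₁) + (z - s₃) ^ 3) = 0 :=
    deriv_fun_zero hd1 hf0
  -- second derivative identity
  have hd2 : ∀ z : ℂ, HasDerivAt
      (fun z => C * (3 * (z - p₃) ^ 2 * (z - p₁) + (z - p₃) ^ 3)
        - (2 * (z - q₁) * (z - q₂) ^ 2 + (z - q₁) ^ 2 * (2 * (z - q₂)))
        - D * (3 * (z - s₃) ^ 2 * (z - s₁) + (z - s₃) ^ 3))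
      (C * (6 * (z - p₃) * (z - p₁) + 6 * (z - p₃) ^ 2)
        - (2 * (z - q₂) ^ 2 + 8 * (z - q₁) * (z - q₂) + 2 * (z - q₁) ^ 2)
        - D * (6 * (z - s₃) * (z - s₁) + 6 * (z - s₃) ^ 2)) z := by
    intro z
    have h1 : HasDerivAt (fun z : ℂ => z - p₃) 1 z := (hasDerivAt_id z).sub_const p₃
    have h2 : HasDerivAt (fun z : ℂ => z - p₁) 1 z := (hasDerivAt_id z).sub_const p₁
    have h3 : HasDerivAt (fun z : ℂ => z - q₁) 1 z := (hasDerivAt_id z).sub_const q₁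
    have h4 : HasDerivAt (fun z : ℂ => z - q₂) 1 z := (hasDerivAt_id z).sub_const q₂
    have h5 : HasDerivAt (fun z : ℂ => z - s₃) 1 z := (hasDerivAt_id z).sub_const s₃
    have h6 : HasDerivAt (fun z : ℂ => z - s₁) 1 z := (hasDerivAt_id z).sub_const s₁
    have Ha : HasDerivAt (fun z : ℂ => C * (3 * (z - p₃) ^ 2 * (z - p₁) + (z - p₃) ^ 3))
        (C * ((3 * (2 * (z - p₃) ^ 1 * 1)) * (z - p₁) + (3 * (z - p₃) ^ 2) * 1
          + 3 * (z - p₃) ^ 2 * 1)) z := by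
      have := ((((h1.pow 2).const_mul (3:ℂ)).mul h2).add (h1.pow 3)).const_mul C
      refine this.congr_deriv ?_
      simp only [Pi.pow_apply]; push_cast; ring
    have Hb : HasDerivAt (fun z : ℂ => 2 * (z - q₁) * (z - q₂) ^ 2 + (z - q₁) ^ 2 * (2 * (z - q₂)))
        ((2 * 1) * (z - q₂) ^ 2 + (2 * (z - q₁)) * (2 * (z - q₂) ^ 1 * 1)
          + ((2 * (z - q₁) ^ 1 * 1) * (2 * (z - q₂)) + (z - q₁) ^ 2 * (2 * 1))) z := by
      have := ((h3.const_mul (2:ℂ)).mul (h4.pow 2)).add ((h3.pow 2).mul (h4.const_mul (2:ℂ)))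
      refine this.congr_deriv ?_
      simp only [Pi.pow_apply]; push_cast; ring
    have Hc : HasDerivAt (fun z : ℂ => D * (3 * (z - s₃) ^ 2 * (z - s₁) + (z - s₃) ^ 3))
        (D * ((3 * (2 * (z - s₃) ^ 1 * 1)) * (z - s₁) + (3 * (z - s₃) ^ 2) * 1
          + 3 * (z - s₃) ^ 2 * 1)) z := by
      have := ((((h5.pow 2).const_mul (3:ℂ)).mul h6).add (h5.pow 3)).const_mul D
      refine this.congr_deriv ?_
      simp only [Pi.pow_apply]; push_cast; ring
    have H := (Ha.sub Hb).sub Hc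
    refine H.congr_deriv ?_
    push_cast; ring
  have hg2 : ∀ z : ℂ, C * (6 * (z - p₃) * (z - p₁) + 6 * (z - p₃) ^ 2)
      - (2 * (z - q₂) ^ 2 + 8 * (z - q₁) * (z - q₂) + 2 * (z - q₁) ^ 2)
      - D * (6 * (z - s₃) * (z - s₁) + 6 * (z - s₃) ^ 2) = 0 :=
    deriv_fun_zero hd2 hg0
  -- A(s₃) = 0
  have hs3p3 : s₃ - p₃ ≠ 0 := sub_ne_zero.mpr h3s3.symm
  have E1 : C * ((4 * s₃ - 3 * p₁ - p₃) * ((s₃ - q₁) * (s₃ - q₂))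
      - 2 * (s₃ - p₃) * (s₃ - p₁) * ((s₃ - q₁) + (s₃ - q₂))) = 0 := by
    apply mul_left_cancel₀ (pow_ne_zero 2 hs3p3)
    linear_combination ((s₃ - q₁) * (s₃ - q₂)) * hg0 s₃
      - 2 * ((s₃ - q₁) + (s₃ - q₂)) * hf0 s₃
  -- A'(s₃) = 0
  have E2 : C * (4 * ((s₃ - q₁) * (s₃ - q₂)) + (4 * s₃ - 3 * p₁ - p₃) * ((s₃ - q₁) + (s₃ - q₂))
      - 2 * (s₃ - p₁) * ((s₃ - q₁) + (s₃ - q₂)) - 2 * (s₃ - p₃) * ((s₃ - q₁) + (s₃ - q₂))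
      - 4 * (s₃ - p₃) * (s₃ - p₁)) = 0 := by
    apply mul_left_cancel₀ (pow_ne_zero 2 hs3p3)
    linear_combination ((s₃ - q₁) * (s₃ - q₂)) * hg2 s₃
      - ((s₃ - q₁) + (s₃ - q₂)) * hg0 s₃ - 4 * hf0 s₃ - 2 * (s₃ - p₃) * E1
  -- key relation from quadratic interpolation of A
  have key : C * ((p₁ - p₃) * ((p₁ - q₁) * (p₁ - q₂))) * (p₃ - s₃) ^ 2
      = C * ((3 * (p₃ - p₁)) * ((p₃ - q₁) * (p₃ - q₂))) * (p₁ - s₃) ^ 2 := by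
    linear_combination ((p₃ - s₃) ^ 2 - (p₁ - s₃) ^ 2) * E1
      + ((p₁ - s₃) * (p₃ - s₃) ^ 2 - (p₃ - s₃) * (p₁ - s₃) ^ 2) * E2
  have hC31 : C * (p₁ - p₃) ≠ 0 := mul_ne_zero hC (sub_ne_zero.mpr h31.symm)
  have q_eq : ((p₁ - q₁) * (p₁ - q₂)) * (p₃ - s₃) ^ 2
      = -3 * ((p₃ - q₁) * (p₃ - q₂)) * (p₁ - s₃) ^ 2 := by
    apply mul_left_cancel₀ hC31
    linear_combination key
  have sq : ((p₁ - q₁) * (p₁ - q₂)) ^ 2 * (p₃ - s₃) ^ 4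
      = 9 * ((p₃ - q₁) * (p₃ - q₂)) ^ 2 * (p₁ - s₃) ^ 4 := by
    linear_combination (((p₁ - q₁) * (p₁ - q₂)) * (p₃ - s₃) ^ 2
      - 3 * ((p₃ - q₁) * (p₃ - q₂)) * (p₁ - s₃) ^ 2) * q_eq
  have main : D * ((p₁ - s₃) ^ 3 * (p₁ - s₁)) * (p₃ - s₃) ^ 4
      = 9 * (D * ((p₃ - s₃) ^ 3 * (p₃ - s₁))) * (p₁ - s₃) ^ 4 := by
    linear_combination (-1 : ℂ) * sq - (p₃ - s₃) ^ 4 * hf0 p₁ + 9 * (p₁ - s₃) ^ 4 * hf0 p₃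
  have hne : D * ((p₁ - s₃) ^ 3 * (p₃ - s₃) ^ 3) ≠ 0 :=
    mul_ne_zero hD (mul_ne_zero (pow_ne_zero 3 (sub_ne_zero.mpr h1s3))
      (pow_ne_zero 3 (sub_ne_zero.mpr h3s3)))
  have crux : (p₁ - s₁) * (p₃ - s₃) = 9 * ((p₃ - s₁) * (p₁ - s₃)) := by
    apply mul_left_cancel₀ hne
    linear_combination main
  have d1 : p₃ - s₁ ≠ 0 := sub_ne_zero.mpr h3s1
  have d2 : p₁ - s₃ ≠ 0 := sub_ne_zero.mpr h1s3
  field_simp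
  linear_combination crux
end

section
/- Let G be a rational map of the sphere of degree 4 with distinct points p₁, p₂, s₁, s₂ such that G has double zeros exactly at p₁ and p₂, G − 1 has double zeros exactly at s₁ and s₂, and G has exactly two poles, each of order 2. Then the cross ratio [p₁, p₂; s₁, s₂] equals −1. -/
private lemma aux_both (p₁ p₂ s₁ s₂ e R₁ R₂ : ℂ) (h12 : p₁ ≠ p₂) (hs12 : s₁ ≠ s₂)
    (hR1 : R₁ ≠ 0)
    (h1 : e*(p₁-s₁)^2 = R₁) (h1' : e*(p₁-s₂)^2 = R₁)
    (h2 : e*(p₂-s₁)^2 = R₂) (h2' : e*(p₂-s₂)^2 = R₂) : False := by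
  have he : e ≠ 0 := by
    intro h; apply hR1; rw [h, zero_mul] at h1; exact h1.symm
  have k1 : (p₁-s₁)^2 = (p₁-s₂)^2 := mul_left_cancel₀ he (h1.trans h1'.symm)
  have k2 : (p₂-s₁)^2 = (p₂-s₂)^2 := mul_left_cancel₀ he (h2.trans h2'.symm)
  have hs : s₂ - s₁ ≠ 0 := sub_ne_zero.mpr (Ne.symm hs12)
  have l1 : 2*p₁ - s₁ - s₂ = 0 := by
    rcases mul_eq_zero.mp (show (s₂-s₁)*(2*p₁-s₁-s₂) = 0 by linear_combination k1) with h | h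
    · exact absurd h hs
    · exact h
  have l2 : 2*p₂ - s₁ - s₂ = 0 := by
    rcases mul_eq_zero.mp (show (s₂-s₁)*(2*p₂-s₁-s₂) = 0 by linear_combination k2) with h | h
    · exact absurd h hs
    · exact h
  exact h12 (by linear_combination (l1 - l2)/2)

private lemma aux_main (p₁ p₂ s₁ s₂ e₁ e₂ R₁ R₂ : ℂ) (hR1 : R₁ ≠ 0)
    (h1 : e₁*(p₁-s₁)^2 = -R₁) (h2 : e₁*(p₂-s₁)^2 = -R₂)
    (h3 : e₂*(p₁-s₂)^2 = R₁) (h4 : e₂*(p₂-s₂)^2 = R₂) :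
    (p₁-s₁)^2*(p₂-s₂)^2 = (p₁-s₂)^2*(p₂-s₁)^2 := by
  have he1 : e₁ ≠ 0 := by
    intro h; apply hR1; rw [h, zero_mul] at h1
    exact neg_eq_zero.mp h1.symm
  have he2 : e₂ ≠ 0 := by
    intro h; apply hR1; rw [h, zero_mul] at h3; exact h3.symm
  have hL : e₁*e₂*((p₁-s₁)^2*(p₂-s₂)^2) = -(R₁*R₂) := by
    linear_combination (e₂*(p₂-s₂)^2)*h1 - R₁*h4
  have hR : e₁*e₂*((p₁-s₂)^2*(p₂-s₁)^2) = -(R₁*R₂) := by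
    linear_combination (e₁*(p₂-s₁)^2)*h3 + R₁*h2
  exact mul_left_cancel₀ (mul_ne_zero he1 he2) (hL.trans hR.symm)

/-- Taylor/double-root step at one branch point `s`. -/
private lemma branch_step (p₁ p₂ q₁ q₂ s c Cc ε : ℂ) (hc : c^2 = Cc) (hε : ε^2 = 1)
    (hB : (s-q₁)*(s-q₂) ≠ 0)
    (hf : c*((s-p₁)*(s-p₂)) = ε*((s-q₁)*(s-q₂)))
    (hder : Cc*((s-p₁)*(s-p₂))*((s-p₁)+(s-p₂)) = ((s-q₁)*(s-q₂))*((s-q₁)+(s-q₂))) :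
    (c-ε)*(p₁-s)^2 = -(ε*((p₁-q₁)*(p₁-q₂))) ∧
      (c-ε)*(p₂-s)^2 = -(ε*((p₂-q₁)*(p₂-q₂))) := by
  have hεne : ε ≠ 0 := by
    intro h; rw [h] at hε; simp at hε
  have hg : c*((s-p₁)*(s-p₂)) + ε*((s-q₁)*(s-q₂)) ≠ 0 := by
    rw [hf, ← two_mul, ← mul_assoc]
    exact mul_ne_zero (mul_ne_zero two_ne_zero hεne) hB
  have hkey : (c*((s-p₁)+(s-p₂)) - ε*((s-q₁)+(s-q₂)))
      * (c*((s-p₁)*(s-p₂)) + ε*((s-q₁)*(s-q₂))) = 0 := by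
    linear_combination 2*hder + 2*((s-p₁)*(s-p₂))*((s-p₁)+(s-p₂))*hc
      - 2*((s-q₁)*(s-q₂))*((s-q₁)+(s-q₂))*hε
      - (c*((s-p₁)+(s-p₂)) + ε*((s-q₁)+(s-q₂)))*hf
  have hdf : c*((s-p₁)+(s-p₂)) - ε*((s-q₁)+(s-q₂)) = 0 :=
    (mul_eq_zero.mp hkey).resolve_right hg
  constructor
  · linear_combination -hf - (p₁-s)*hdf
  · linear_combination -hf - (p₂-s)*hdf

/-- Lemma 4.4: let `G` be a degree-4 rational map with double zeros exactly at
`p₁, p₂`, `G - 1` having double zeros exactly at `s₁, s₂`, and exactly two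
poles `q₁, q₂`, each of order 2. Writing
`G(z) = C (z - p₁)² (z - p₂)² / ((z - q₁)² (z - q₂)²)`, the zero structure of
`G - 1` is encoded by the polynomial identity below. Then the cross ratio
`[p₁, p₂; s₁, s₂] = -1`. -/
theorem cross_ratio_case4 (p₁ p₂ s₁ s₂ q₁ q₂ : ℂ)
    (h12 : p₁ ≠ p₂) (h1s1 : p₁ ≠ s₁) (h1s2 : p₁ ≠ s₂)
    (h2s1 : p₂ ≠ s₁) (h2s2 : p₂ ≠ s₂) (hs12 : s₁ ≠ s₂)
    (hq : q₁ ≠ q₂)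
    (hq1 : q₁ ∉ ({p₁, p₂, s₁, s₂} : Set ℂ)) (hq2 : q₂ ∉ ({p₁, p₂, s₁, s₂} : Set ℂ))
    (C D : ℂ) (hC : C ≠ 0) (hD : D ≠ 0)
    (heq : ∀ z : ℂ, C * (z - p₁) ^ 2 * (z - p₂) ^ 2 - (z - q₁) ^ 2 * (z - q₂) ^ 2 =
      D * (z - s₁) ^ 2 * (z - s₂) ^ 2) :
    (p₁ - s₁) / (p₁ - s₂) * ((p₂ - s₂) / (p₂ - s₁)) = -1 := by
  simp only [Set.mem_insert_iff, Set.mem_singleton_iff, not_or] at hq1 hq2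
  obtain ⟨hq1p1, hq1p2, hq1s1, hq1s2⟩ := hq1
  obtain ⟨hq2p1, hq2p2, hq2s1, hq2s2⟩ := hq2
  -- the derivative of the polynomial identity
  have hPP : (Polynomial.C C * (Polynomial.X - Polynomial.C p₁)^2 * (Polynomial.X - Polynomial.C p₂)^2
      - (Polynomial.X - Polynomial.C q₁)^2 * (Polynomial.X - Polynomial.C q₂)^2
      - Polynomial.C D * (Polynomial.X - Polynomial.C s₁)^2 * (Polynomial.X - Polynomial.C s₂)^2
      : Polynomial ℂ) = 0 := by
    apply Polynomial.funext
    intro z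
    simp only [Polynomial.eval_sub, Polynomial.eval_mul, Polynomial.eval_pow, Polynomial.eval_C,
      Polynomial.eval_X, Polynomial.eval_zero]
    linear_combination heq z
  have hderpoly := congrArg Polynomial.derivative hPP
  have hder : ∀ z : ℂ, C * ((z-p₁)*(z-p₂)) * ((z-p₁)+(z-p₂))
      - ((z-q₁)*(z-q₂)) * ((z-q₁)+(z-q₂))
      = D * ((z-s₁)*(z-s₂)) * ((z-s₁)+(z-s₂)) := by
    intro z
    have h2 := congrArg (Polynomial.eval z) hderpoly
    simp only [Polynomial.derivative_sub, Polynomial.derivative_mul, Polynomial.derivative_pow,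
      Polynomial.derivative_C, Polynomial.derivative_X, Polynomial.eval_sub, Polynomial.eval_mul,
      Polynomial.eval_pow, Polynomial.eval_C, Polynomial.eval_X, Polynomial.eval_add,
      Polynomial.eval_one, map_zero, Polynomial.eval_zero] at h2
    linear_combination h2 / 2
  obtain ⟨c, hc⟩ : ∃ c : ℂ, c^2 = C := IsAlgClosed.exists_pow_nat_eq C zero_lt_two
  -- nonvanishing of the various factors
  have hB1 : (s₁-q₁)*(s₁-q₂) ≠ 0 :=
    mul_ne_zero (sub_ne_zero.mpr fun h => hq1s1 h.symm) (sub_ne_zero.mpr fun h => hq2s1 h.symm)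
  have hB2 : (s₂-q₁)*(s₂-q₂) ≠ 0 :=
    mul_ne_zero (sub_ne_zero.mpr fun h => hq1s2 h.symm) (sub_ne_zero.mpr fun h => hq2s2 h.symm)
  have hQ1 : (p₁-q₁)*(p₁-q₂) ≠ 0 :=
    mul_ne_zero (sub_ne_zero.mpr fun h => hq1p1 h.symm) (sub_ne_zero.mpr fun h => hq2p1 h.symm)
  have hQ2 : (p₂-q₁)*(p₂-q₂) ≠ 0 :=
    mul_ne_zero (sub_ne_zero.mpr fun h => hq1p2 h.symm) (sub_ne_zero.mpr fun h => hq2p2 h.symm)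
  -- at s₁ and s₂ one of the two factors of C P² - Q² vanishes
  have hfg1 : (c*((s₁-p₁)*(s₁-p₂)) - (s₁-q₁)*(s₁-q₂))
      * (c*((s₁-p₁)*(s₁-p₂)) + (s₁-q₁)*(s₁-q₂)) = 0 := by
    linear_combination heq s₁ + ((s₁-p₁)*(s₁-p₂))^2 * hc
  have hfg2 : (c*((s₂-p₁)*(s₂-p₂)) - (s₂-q₁)*(s₂-q₂))
      * (c*((s₂-p₁)*(s₂-p₂)) + (s₂-q₁)*(s₂-q₂)) = 0 := by
    linear_combination heq s₂ + ((s₂-p₁)*(s₂-p₂))^2 * hc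
  obtain ⟨ε₁, hε₁, hf1⟩ : ∃ ε₁ : ℂ, ε₁^2 = 1 ∧
      c*((s₁-p₁)*(s₁-p₂)) = ε₁*((s₁-q₁)*(s₁-q₂)) := by
    rcases mul_eq_zero.mp hfg1 with h | h
    · exact ⟨1, by ring, by linear_combination h⟩
    · exact ⟨-1, by ring, by linear_combination h⟩
  obtain ⟨ε₂, hε₂, hf2⟩ : ∃ ε₂ : ℂ, ε₂^2 = 1 ∧
      c*((s₂-p₁)*(s₂-p₂)) = ε₂*((s₂-q₁)*(s₂-q₂)) := by
    rcases mul_eq_zero.mp hfg2 with h | h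
    · exact ⟨1, by ring, by linear_combination h⟩
    · exact ⟨-1, by ring, by linear_combination h⟩
  have hder1 : C*((s₁-p₁)*(s₁-p₂))*((s₁-p₁)+(s₁-p₂))
      = ((s₁-q₁)*(s₁-q₂))*((s₁-q₁)+(s₁-q₂)) := by linear_combination hder s₁
  have hder2 : C*((s₂-p₁)*(s₂-p₂))*((s₂-p₁)+(s₂-p₂))
      = ((s₂-q₁)*(s₂-q₂))*((s₂-q₁)+(s₂-q₂)) := by linear_combination hder s₂
  obtain ⟨hT11, hT21⟩ := branch_step p₁ p₂ q₁ q₂ s₁ c C ε₁ hc hε₁ hB1 hf1 hder1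
  obtain ⟨hT12, hT22⟩ := branch_step p₁ p₂ q₁ q₂ s₂ c C ε₂ hc hε₂ hB2 hf2 hder2
  -- the two signs must differ
  have hεne : ε₂ = -ε₁ := by
    by_contra hne
    have heps : ε₂ = ε₁ := by
      have h0 : (ε₂ - ε₁) * (ε₂ + ε₁) = 0 := by linear_combination hε₂ - hε₁
      rcases mul_eq_zero.mp h0 with h | h
      · exact sub_eq_zero.mp h
      · exact absurd (by linear_combination h) hne
    rw [heps] at hT12 hT22
    exact aux_both p₁ p₂ s₁ s₂ (c - ε₁) (-(ε₁*((p₁-q₁)*(p₁-q₂)))) (-(ε₁*((p₂-q₁)*(p₂-q₂))))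
      h12 hs12 (by
        intro h
        apply hQ1
        have hε1ne : ε₁ ≠ 0 := by intro hh; rw [hh] at hε₁; simp at hε₁
        have := neg_eq_zero.mp h
        exact (mul_eq_zero.mp this).resolve_left hε1ne)
      hT11 hT12 hT21 hT22
  rw [hεne] at hT12 hT22
  -- now apply the main cancellation
  have hsq : (p₁-s₁)^2*(p₂-s₂)^2 = (p₁-s₂)^2*(p₂-s₁)^2 := by
    refine aux_main p₁ p₂ s₁ s₂ (c-ε₁) (c+ε₁) (ε₁*((p₁-q₁)*(p₁-q₂))) (ε₁*((p₂-q₁)*(p₂-q₂)))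
      ?_ hT11 hT21 ?_ ?_
    · have hε1ne : ε₁ ≠ 0 := by intro hh; rw [hh] at hε₁; simp at hε₁
      exact mul_ne_zero hε1ne hQ1
    · linear_combination hT12
    · linear_combination hT22
  -- conclude
  have hne12 : p₁ - s₂ ≠ 0 := sub_ne_zero.mpr h1s2
  have hne21 : p₂ - s₁ ≠ 0 := sub_ne_zero.mpr h2s1
  have hfac : ((p₁-s₁)*(p₂-s₂) - (p₁-s₂)*(p₂-s₁)) * ((p₁-s₁)*(p₂-s₂) + (p₁-s₂)*(p₂-s₁)) = 0 := by
    linear_combination hsq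
  rcases mul_eq_zero.mp hfac with h | h
  · exfalso
    have hne : (p₁-p₂)*(s₁-s₂) ≠ 0 :=
      mul_ne_zero (sub_ne_zero.mpr h12) (sub_ne_zero.mpr hs12)
    exact hne (by linear_combination h)
  · field_simp
    linear_combination h
end
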